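/- If f : [a,b] → ℝ has absolutely continuous (n-1)st derivative with f^{(n)} ∈ L²([a,b]), then with φ_n(x) = ((b-a)/2)^n · 2^n(n!)²/(2n)! · P_n((2x-a-b)/(b-a)), the quadrature error satisfies |E_n(f)| ≤ ‖f^{(n)}‖₂ n! (b-a)^{n+1/2} / ((2n+1)^{1/2} (2n)!). -/

import Mathlib

open MeasureTheory Polynomial intervalIntegral

/-- The degree-`n` Legendre polynomial, via Rodrigues' formula. -/
noncomputable def legendre (n : ℕ) : Polynomial ℝ :=
  Polynomial.C (1 / (2 ^ n * (n.factorial : ℝ))) *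
    Polynomial.derivative^[n] ((Polynomial.X ^ 2 - 1) ^ n)

/-!
Up to the factor `(-1)^n / n!`, `E_n(f)` is the `L²` pairing of `f⁽ⁿ⁾` with `φ_n`, so the
Cauchy–Schwarz inequality bounds it by `‖f⁽ⁿ⁾‖₂ ‖φ_n‖₂`. The affine change of variables onto
`[-1, 1]` reduces `‖φ_n‖₂²` to `∫ P_n² = 2 / (2n + 1)`. By Rodrigues' formula and `n`
integrations by parts (the boundary terms vanish because `(x² - 1)ⁿ` has zeros of order `n` at
`±1`), `∫ (Dⁿ(x² - 1)ⁿ)² = (2n)! ∫ (1 - x²)ⁿ`, and the last integral is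
`2^(2n+1) (n!)² / (2n+1)!` by the recursion obtained from differentiating `x (1 - x²)ⁿ⁺¹`.
-/

open scoped Nat

theorem Polynomial.Monic.iterate_derivative_natDegree {R : Type*} [Semiring R] {p : R[X]}
    (hp : p.Monic) : derivative^[p.natDegree] p = C (p.natDegree ! : R) := by
  ext i
  rw [coeff_iterate_derivative, coeff_C]
  rcases Nat.eq_zero_or_pos i with rfl | hi
  · simp [hp.coeff_natDegree, Nat.descFactorial_self]
  · rw [coeff_eq_zero_of_natDegree_lt (by omega), smul_zero, if_neg hi.ne']

section RodriguesPoly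

variable {R : Type*} [CommRing R]

theorem eval_iterate_derivative_X_sq_sub_one_pow_eq_zero {n k : ℕ} (hk : k < n) {c : R}
    (hc : c ^ 2 = 1) : (derivative^[k] ((X ^ 2 - 1 : R[X]) ^ n)).eval c = 0 := by
  obtain ⟨r, hr⟩ := pow_sub_dvd_iterate_derivative_pow (X ^ 2 - 1 : R[X]) n k
  obtain ⟨s, hs⟩ := (dvd_pow_self (X ^ 2 - 1 : R[X]) (Nat.sub_ne_zero_of_lt hk)).trans ⟨r, hr⟩
  simp [hs, hc]

theorem iterate_derivative_X_sq_sub_one_pow_two_mul [Nontrivial R] (n : ℕ) :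
    derivative^[2 * n] ((X ^ 2 - 1 : R[X]) ^ n) = C ((2 * n)! : R) := by
  have hmonic : (X ^ 2 - 1 : R[X]).Monic := monic_X_pow_sub_C 1 two_ne_zero
  have hdeg : ((X ^ 2 - 1 : R[X]) ^ n).natDegree = 2 * n := by
    rw [hmonic.natDegree_pow, ← C_1, natDegree_X_pow_sub_C, mul_comm]
  simpa [hdeg] using (hmonic.pow n).iterate_derivative_natDegree

end RodriguesPoly

section IntegrationByParts

variable {a b : ℝ} {p q : ℝ[X]}

theorem integral_eval_derivative_mul_eval_of_eval_eq_zero (ha : p.eval a = 0)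
    (hb : p.eval b = 0) :
    ∫ x in a..b, (derivative p).eval x * q.eval x =
      -∫ x in a..b, p.eval x * (derivative q).eval x := by
  have := integral_mul_deriv_eq_deriv_mul (a := a) (b := b) (fun x _ => q.hasDerivAt x)
    (fun x _ => p.hasDerivAt x)
    ((derivative q).continuous.intervalIntegrable _ _)
    ((derivative p).continuous.intervalIntegrable _ _)
  simp only [ha, hb, mul_zero, sub_zero, zero_sub] at this
  simpa only [mul_comm] using this

theorem integral_eval_iterate_derivative_mul_eval {k : ℕ}
    (hp : ∀ j < k, (derivative^[j] p).eval a = 0 ∧ (derivative^[j] p).eval b = 0) :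
    ∫ x in a..b, (derivative^[k] p).eval x * q.eval x =
      (-1) ^ k * ∫ x in a..b, p.eval x * (derivative^[k] q).eval x := by
  induction k generalizing p with
  | zero => simp
  | succ k ih =>
    have ha : p.eval a = 0 := (hp 0 k.succ_pos).1
    have hb : p.eval b = 0 := (hp 0 k.succ_pos).2
    rw [Function.iterate_succ_apply, ih fun j hj => hp (j + 1) (by omega),
      integral_eval_derivative_mul_eval_of_eval_eq_zero ha hb, Function.iterate_succ_apply',
      pow_succ]
    ring

end IntegrationByParts

theorem integral_one_sub_sq_pow_succ (n : ℕ) :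
    ∫ x in (-1 : ℝ)..1, (1 - x ^ 2) ^ (n + 1) =
      (2 * (n : ℝ) + 2) / (2 * n + 3) * ∫ x in (-1 : ℝ)..1, (1 - x ^ 2) ^ n := by
  have hderiv : ∀ x : ℝ, HasDerivAt (fun x : ℝ => x * (1 - x ^ 2) ^ (n + 1))
      ((2 * n + 3) * (1 - x ^ 2) ^ (n + 1) - (2 * n + 2) * (1 - x ^ 2) ^ n) x := by
    intro x
    refine ((hasDerivAt_id' x).fun_mul
      (((hasDerivAt_pow 2 x).const_sub 1).fun_pow (n + 1))).congr_deriv ?_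
    simp only [Nat.add_sub_cancel]
    push_cast
    ring
  have hzero := integral_eq_sub_of_hasDerivAt (a := -1) (b := 1) (fun x _ => hderiv x)
    ((by fun_prop : Continuous fun x : ℝ =>
      (2 * n + 3) * (1 - x ^ 2) ^ (n + 1) - (2 * n + 2) * (1 - x ^ 2) ^ n).intervalIntegrable _ _)
  rw [intervalIntegral.integral_sub (Continuous.intervalIntegrable (by fun_prop) _ _)
    (Continuous.intervalIntegrable (by fun_prop) _ _), intervalIntegral.integral_const_mul,
    intervalIntegral.integral_const_mul] at hzero
  norm_num at hzero
  field_simp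
  linarith

theorem integral_one_sub_sq_pow (n : ℕ) :
    ∫ x in (-1 : ℝ)..1, (1 - x ^ 2) ^ n = 2 ^ (2 * n + 1) * (n ! : ℝ) ^ 2 / (2 * n + 1)! := by
  induction n with
  | zero => norm_num
  | succ n ih =>
    rw [integral_one_sub_sq_pow_succ, ih, show 2 * (n + 1) + 1 = 2 * n + 1 + 1 + 1 by ring,
      Nat.factorial_succ (2 * n + 2), Nat.factorial_succ (2 * n + 1), Nat.factorial_succ n]
    push_cast
    field_simp
    ring

theorem integral_sq_eval_legendre (n : ℕ) :
    ∫ x in (-1 : ℝ)..1, (legendre n).eval x ^ 2 = 2 / (2 * n + 1) := by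
  set u : ℝ[X] := (X ^ 2 - 1) ^ n with hu
  have hboundary : ∀ j < n, (derivative^[j] u).eval (-1) = 0 ∧ (derivative^[j] u).eval 1 = 0 :=
    fun j hj => ⟨eval_iterate_derivative_X_sq_sub_one_pow_eq_zero hj (by norm_num),
      eval_iterate_derivative_X_sq_sub_one_pow_eq_zero hj (by norm_num)⟩
  have hrodrigues : ∫ x in (-1 : ℝ)..1, (derivative^[n] u).eval x ^ 2 =
      (2 * n)! * ∫ x in (-1 : ℝ)..1, (1 - x ^ 2) ^ n := by
    calc ∫ x in (-1 : ℝ)..1, (derivative^[n] u).eval x ^ 2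
        = ∫ x in (-1 : ℝ)..1, (derivative^[n] u).eval x * (derivative^[n] u).eval x := by
          simp only [sq]
      _ = (-1) ^ n * ∫ x in (-1 : ℝ)..1, u.eval x * (derivative^[2 * n] u).eval x := by
          rw [integral_eval_iterate_derivative_mul_eval hboundary, ← Function.iterate_add_apply,
            two_mul]
      _ = (2 * n)! * ∫ x in (-1 : ℝ)..1, (1 - x ^ 2) ^ n := by
          rw [iterate_derivative_X_sq_sub_one_pow_two_mul, ← intervalIntegral.integral_const_mul,
            ← intervalIntegral.integral_const_mul]
          congr 1 with x
          simp only [hu, eval_pow, eval_sub, eval_X, eval_one, eval_C, ← mul_assoc, ← mul_pow]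
          ring
  have hlegendre : ∀ x, (legendre n).eval x ^ 2 =
      (1 / (2 ^ n * n ! : ℝ)) ^ 2 * (derivative^[n] u).eval x ^ 2 := fun x => by
    rw [legendre, eval_mul, eval_C, mul_pow]
  simp only [hlegendre]
  rw [intervalIntegral.integral_const_mul, hrodrigues, integral_one_sub_sq_pow, Nat.factorial_succ]
  push_cast
  field_simp
  ring

theorem integral_comp_affine_neg_one_one {E : Type*} [NormedAddCommGroup E] [NormedSpace ℝ E]
    (h : ℝ → E) {a b : ℝ} (hab : a ≠ b) :
    ∫ x in a..b, h ((2 * x - a - b) / (b - a)) = ((b - a) / 2) • ∫ y in (-1 : ℝ)..1, h y := by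
  have hba : b - a ≠ 0 := sub_ne_zero.2 hab.symm
  have harg : ∀ x, (2 * x - a - b) / (b - a) = 2 / (b - a) * x - (a + b) / (b - a) := fun x => by
    field_simp
    ring
  have hleft : 2 / (b - a) * a - (a + b) / (b - a) = -1 := by field_simp; ring
  have hright : 2 / (b - a) * b - (a + b) / (b - a) = 1 := by field_simp; ring
  simp only [harg]
  rw [intervalIntegral.integral_comp_mul_sub h (div_ne_zero two_ne_zero hba), hleft, hright,
    inv_div]

theorem integral_sq_eval_legendre_comp_affine (n : ℕ) {a b : ℝ} (hab : a ≠ b) :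
    ∫ x in a..b, (legendre n).eval ((2 * x - a - b) / (b - a)) ^ 2 = (b - a) / (2 * n + 1) := by
  rw [integral_comp_affine_neg_one_one (fun y => (legendre n).eval y ^ 2) hab,
    integral_sq_eval_legendre, smul_eq_mul]
  field_simp

theorem abs_integral_mul_le_integral_sq_rpow_mul {a b : ℝ} (hab : a ≤ b) {f g : ℝ → ℝ}
    (hf : IntervalIntegrable f volume a b) (hf2 : IntervalIntegrable (fun x => f x ^ 2) volume a b)
    (hg : IntervalIntegrable g volume a b)
    (hg2 : IntervalIntegrable (fun x => g x ^ 2) volume a b) :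
    |∫ x in a..b, f x * g x| ≤
      (∫ x in a..b, f x ^ 2) ^ (1 / 2 : ℝ) * (∫ x in a..b, g x ^ 2) ^ (1 / 2 : ℝ) := by
  have hmemLp : ∀ {u : ℝ → ℝ}, IntervalIntegrable u volume a b →
      IntervalIntegrable (fun x => u x ^ 2) volume a b →
      MemLp u (ENNReal.ofReal 2) (volume.restrict (Set.Ioc a b)) := fun hu hu2 => by
    rw [ENNReal.ofReal_ofNat]
    exact (memLp_two_iff_integrable_sq hu.1.aestronglyMeasurable).2 hu2.1
  have holder := integral_mul_norm_le_Lp_mul_Lq Real.HolderConjugate.two_two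
    (hmemLp hf hf2) (hmemLp hg hg2)
  simp only [Real.norm_eq_abs, ← abs_mul, sq_abs, Real.rpow_two] at holder
  simp only [intervalIntegral.integral_of_le hab]
  exact MeasureTheory.abs_integral_le_integral_abs.trans holder

theorem corrected_trapezoid_error_legendre_general
    (a b : ℝ) (hab : a < b) (n : ℕ)
    (g : ℝ → ℝ)
    (hg : IntervalIntegrable g volume a b)
    (hg2 : IntervalIntegrable (fun x => (g x) ^ 2) volume a b) :
    |((-1 : ℝ) ^ n / n.factorial) *
        ∫ x in a..b, g x *
          (((b - a) / 2) ^ n * (2 ^ n * (n.factorial : ℝ) ^ 2 / ((2 * n).factorial : ℝ)) *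
            (legendre n).eval ((2 * x - a - b) / (b - a)))|
      ≤ (∫ x in a..b, (g x) ^ 2) ^ ((1 : ℝ) / 2) * (n.factorial : ℝ) *
          (b - a) ^ ((n : ℝ) + 1 / 2) /
          ((2 * (n : ℝ) + 1) ^ ((1 : ℝ) / 2) * ((2 * n).factorial : ℝ)) := by
  set c : ℝ := ((b - a) / 2) ^ n * (2 ^ n * (n.factorial : ℝ) ^ 2 / ((2 * n).factorial : ℝ))
    with hc
  set S : ℝ := (∫ x in a..b, (g x) ^ 2) ^ ((1 : ℝ) / 2)
  have hba : 0 < b - a := sub_pos.2 hab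
  have hkernel : Continuous fun x => c * (legendre n).eval ((2 * x - a - b) / (b - a)) := by
    fun_prop
  have hkernel_sq : ∫ x in a..b, (c * (legendre n).eval ((2 * x - a - b) / (b - a))) ^ 2 =
      c ^ 2 * ((b - a) / (2 * n + 1)) := by
    simp only [mul_pow]
    rw [intervalIntegral.integral_const_mul, integral_sq_eval_legendre_comp_affine n hab.ne]
  have hCS := abs_integral_mul_le_integral_sq_rpow_mul hab.le hg hg2
    (hkernel.intervalIntegrable a b) ((hkernel.pow 2).intervalIntegrable a b)
  rw [hkernel_sq] at hCS
  have hc_eq : c = (b - a) ^ n * (n.factorial : ℝ) ^ 2 / (2 * n).factorial := by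
    rw [hc, div_pow]
    field_simp
  calc _ = |∫ x in a..b, g x * (c * (legendre n).eval ((2 * x - a - b) / (b - a)))| /
        n.factorial := by
        rw [abs_mul, abs_div, abs_pow, abs_neg, abs_one, one_pow, Nat.abs_cast]
        ring
    _ ≤ S * (c ^ 2 * ((b - a) / (2 * n + 1))) ^ (1 / 2 : ℝ) / n.factorial := by gcongr
    _ = _ := by
        rw [Real.rpow_add hba, Real.rpow_natCast]
        simp only [← Real.sqrt_eq_rpow]
        rw [Real.sqrt_mul (sq_nonneg c), Real.sqrt_sq (by positivity),
          Real.sqrt_div' _ (by positivity), hc_eq]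
        field_simp

/-- Sharp error bound for the corrected trapezoidal rule with the Legendre polynomial
when `f⁽ⁿ⁾ ∈ L²([a,b])`. -/
theorem corrected_trapezoid_error_legendre
    (a b : ℝ) (hab : a < b) (n : ℕ) (hn : 1 ≤ n)
    (f g : ℝ → ℝ)
    (hf : ContDiffOn ℝ (n - 1 : ℕ) f (Set.Icc a b))
    (hg : IntervalIntegrable g volume a b)
    (hFTC : ∀ x ∈ Set.Icc a b,
      iteratedDeriv (n - 1) f x = iteratedDeriv (n - 1) f a + ∫ t in a..x, g t)
    (hg2 : IntervalIntegrable (fun x => (g x) ^ 2) volume a b) :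
    |((-1 : ℝ) ^ n / n.factorial) *
        ∫ x in a..b, g x *
          (((b - a) / 2) ^ n * (2 ^ n * (n.factorial : ℝ) ^ 2 / ((2 * n).factorial : ℝ)) *
            (legendre n).eval ((2 * x - a - b) / (b - a)))|
      ≤ (∫ x in a..b, (g x) ^ 2) ^ ((1 : ℝ) / 2) * (n.factorial : ℝ) *
          (b - a) ^ ((n : ℝ) + 1 / 2) /
          ((2 * (n : ℝ) + 1) ^ ((1 : ℝ) / 2) * ((2 * n).factorial : ℝ)) :=
  corrected_trapezoid_error_legendre_general a b hab n g hg hg2
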